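/- Let q, r, ψ : ℝ × ℝ → ℝ be smooth and ζ ∈ ℝ a parameter. Suppose ψ satisfies the linear pair ψ_{xx} = (ζ + q + ζ^{-1} r) ψ and ψ_t = (4ζ - 2q) ψ_x + q_x ψ (with ζ ≠ 0), and suppose q and r satisfy q_t = q_{xxx} - 6qq_x + 4r_x and r_t = -4q_x r - 2q r_x. Then the compatibility condition ∂_t(ψ_{xx}) = ∂_x²(ψ_t) holds, i.e. differentiating the first linear equation in t agrees with differentiating the second twice in x, after substituting the equations themselves. -/

import Mathlib

noncomputable section

/-- partial derivative in the first (space) variable -/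
def pdx (f : ℝ → ℝ → ℝ) : ℝ → ℝ → ℝ := fun x t => deriv (fun y => f y t) x

/-- partial derivative in the second (time) variable -/
def pdt (f : ℝ → ℝ → ℝ) : ℝ → ℝ → ℝ := fun x t => deriv (fun s => f x s) t

/-- smoothness of a function of two real variables -/
def smooth2 (f : ℝ → ℝ → ℝ) : Prop := ContDiff ℝ (⊤ : ℕ∞) (fun p : ℝ × ℝ => f p.1 p.2)

lemma smooth2.sliceX {f : ℝ → ℝ → ℝ} (hf : smooth2 f) (t : ℝ) :
    ContDiff ℝ (⊤ : ℕ∞) (fun y => f y t) :=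
  hf.comp (contDiff_id.prodMk contDiff_const)

lemma smooth2.sliceT {f : ℝ → ℝ → ℝ} (hf : smooth2 f) (x : ℝ) :
    ContDiff ℝ (⊤ : ℕ∞) (fun s => f x s) :=
  hf.comp (contDiff_const.prodMk contDiff_id)

lemma smooth2.hasDerivX {f : ℝ → ℝ → ℝ} (hf : smooth2 f) (x t : ℝ) :
    HasDerivAt (fun y => f y t) (pdx f x t) x :=
  ((hf.sliceX t).differentiable (by simp) x).hasDerivAt

lemma smooth2.hasDerivT {f : ℝ → ℝ → ℝ} (hf : smooth2 f) (x t : ℝ) :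
    HasDerivAt (fun s => f x s) (pdt f x t) t :=
  ((hf.sliceT x).differentiable (by simp) t).hasDerivAt

lemma pdx_eq_fderiv {f : ℝ → ℝ → ℝ} (hf : smooth2 f) (x t : ℝ) :
    pdx f x t = fderiv ℝ (fun p : ℝ × ℝ => f p.1 p.2) (x, t) (1, 0) := by
  have h1 : HasDerivAt (fun y : ℝ => (y, t)) ((1 : ℝ), (0 : ℝ)) x :=
    (hasDerivAt_id x).prodMk (hasDerivAt_const x t)
  have h2 := ((hf.differentiable (by simp) (x, t)).hasFDerivAt).comp_hasDerivAt x h1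
  exact h2.deriv

lemma smooth2.pdxSmooth {f : ℝ → ℝ → ℝ} (hf : smooth2 f) : smooth2 (pdx f) := by
  have h : ContDiff ℝ (⊤ : ℕ∞) (fun p : ℝ × ℝ =>
      fderiv ℝ (fun p : ℝ × ℝ => f p.1 p.2) p ((1 : ℝ), (0 : ℝ))) :=
    (hf.fderiv_right (by simp)).clm_apply contDiff_const
  have he : (fun p : ℝ × ℝ => pdx f p.1 p.2) = fun p : ℝ × ℝ =>
      fderiv ℝ (fun p : ℝ × ℝ => f p.1 p.2) p ((1 : ℝ), (0 : ℝ)) := by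
    funext p; exact pdx_eq_fderiv hf p.1 p.2
  rw [smooth2, he]; exact h

/-- Lax compatibility for the Zakharov–Ito system: differentiating
    the spatial linear equation in t agrees with differentiating the temporal one
    twice in x. -/
theorem stmt_14 (q r ψ : ℝ → ℝ → ℝ) (ζ : ℝ) (hζ : ζ ≠ 0)
    (hq : smooth2 q) (hr : smooth2 r) (hψ : smooth2 ψ)
    (hlin1 : ∀ x t, pdx (pdx ψ) x t = (ζ + q x t + ζ⁻¹ * r x t) * ψ x t)
    (hlin2 : ∀ x t, pdt ψ x t = (4 * ζ - 2 * q x t) * pdx ψ x t + pdx q x t * ψ x t)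
    (heqq : ∀ x t, pdt q x t = pdx (pdx (pdx q)) x t
      - 6 * q x t * pdx q x t + 4 * pdx r x t)
    (heqr : ∀ x t, pdt r x t = -4 * pdx q x t * r x t - 2 * q x t * pdx r x t) :
    ∀ x t, pdt (fun x t => (ζ + q x t + ζ⁻¹ * r x t) * ψ x t) x t =
      pdx (pdx (fun x t =>
        (4 * ζ - 2 * q x t) * pdx ψ x t + pdx q x t * ψ x t)) x t := by
  intro x t
  -- Left side
  have EL : pdt (fun x t => (ζ + q x t + ζ⁻¹ * r x t) * ψ x t) x t
      = ((0 + pdt q x t) + ζ⁻¹ * pdt r x t) * ψ x t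
        + (ζ + q x t + ζ⁻¹ * r x t) * pdt ψ x t := by
    have h : HasDerivAt (fun s => (ζ + q x s + ζ⁻¹ * r x s) * ψ x s)
        (((0 + pdt q x t) + ζ⁻¹ * pdt r x t) * ψ x t
          + (ζ + q x t + ζ⁻¹ * r x t) * pdt ψ x t) t :=
      (((hasDerivAt_const t ζ).add (hq.hasDerivT x t)).add
        ((hr.hasDerivT x t).const_mul ζ⁻¹)).mul (hψ.hasDerivT x t)
    exact h.deriv
  -- first x-derivative of the inner function, with ψ_xx substituted
  set G : ℝ → ℝ → ℝ := fun x t =>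
    (4 * ζ - 2 * q x t) * pdx ψ x t + pdx q x t * ψ x t with hGdef
  set H : ℝ → ℝ → ℝ := fun a b =>
    ((0 - 2 * pdx q a b) * pdx ψ a b
      + (4 * ζ - 2 * q a b) * ((ζ + q a b + ζ⁻¹ * r a b) * ψ a b))
    + (pdx (pdx q) a b * ψ a b + pdx q a b * pdx ψ a b) with hHdef
  have hGH : pdx G = H := by
    funext a b
    have h : HasDerivAt (fun y => (4 * ζ - 2 * q y b) * pdx ψ y b + pdx q y b * ψ y b)
        (((0 - 2 * pdx q a b) * pdx ψ a b
            + (4 * ζ - 2 * q a b) * pdx (pdx ψ) a b)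
          + (pdx (pdx q) a b * ψ a b + pdx q a b * pdx ψ a b)) a :=
      (((hasDerivAt_const a (4 * ζ)).sub ((hq.hasDerivX a b).const_mul 2)).mul
          ((hψ.pdxSmooth).hasDerivX a b)).add
        (((hq.pdxSmooth).hasDerivX a b).mul (hψ.hasDerivX a b))
    have := h.deriv
    simp only [hGdef, hHdef]
    rw [show pdx G a b = deriv (fun y => G y b) a from rfl]
    simp only [hGdef]
    rw [this, hlin1]
  -- second x-derivative
  have EH : pdx H x t =
      (((0 - 2 * pdx (pdx q) x t) * pdx ψ x t
          + (0 - 2 * pdx q x t) * ((ζ + q x t + ζ⁻¹ * r x t) * ψ x t))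
        + ((0 - 2 * pdx q x t) * ((ζ + q x t + ζ⁻¹ * r x t) * ψ x t)
          + (4 * ζ - 2 * q x t) *
            (((0 + pdx q x t) + ζ⁻¹ * pdx r x t) * ψ x t
              + (ζ + q x t + ζ⁻¹ * r x t) * pdx ψ x t)))
      + ((pdx (pdx (pdx q)) x t * ψ x t + pdx (pdx q) x t * pdx ψ x t)
        + (pdx (pdx q) x t * pdx ψ x t
          + pdx q x t * ((ζ + q x t + ζ⁻¹ * r x t) * ψ x t))) := by
    have h : HasDerivAt (fun y => H y t)
        ((((0 - 2 * pdx (pdx q) x t) * pdx ψ x t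
            + (0 - 2 * pdx q x t) * pdx (pdx ψ) x t)
          + ((0 - 2 * pdx q x t) * ((ζ + q x t + ζ⁻¹ * r x t) * ψ x t)
            + (4 * ζ - 2 * q x t) *
              (((0 + pdx q x t) + ζ⁻¹ * pdx r x t) * ψ x t
                + (ζ + q x t + ζ⁻¹ * r x t) * pdx ψ x t)))
        + ((pdx (pdx (pdx q)) x t * ψ x t + pdx (pdx q) x t * pdx ψ x t)
          + (pdx (pdx q) x t * pdx ψ x t + pdx q x t * pdx (pdx ψ) x t))) x := by
      refine HasDerivAt.add (HasDerivAt.add ?_ ?_) (HasDerivAt.add ?_ ?_)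
      · exact ((hasDerivAt_const x (0:ℝ)).sub
          (((hq.pdxSmooth).hasDerivX x t).const_mul 2)).mul
          ((hψ.pdxSmooth).hasDerivX x t)
      · exact (((hasDerivAt_const x (4*ζ)).sub ((hq.hasDerivX x t).const_mul 2)).mul
          ((((hasDerivAt_const x ζ).add (hq.hasDerivX x t)).add
            ((hr.hasDerivX x t).const_mul ζ⁻¹)).mul (hψ.hasDerivX x t)))
      · exact (((hq.pdxSmooth).pdxSmooth.hasDerivX x t).mul (hψ.hasDerivX x t))
      · exact (((hq.pdxSmooth).hasDerivX x t).mul ((hψ.pdxSmooth).hasDerivX x t))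
    have hd := h.deriv
    rw [show pdx H x t = deriv (fun y => H y t) x from rfl, hd, hlin1]
  rw [EL, hGH, EH, heqq, heqr, hlin2]
  field_simp
  ring
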